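/- arXiv:1010.4665 — 2 statements merged into one kernel-verified Lean document; each statement's English description precedes it below -/
import Mathlib

section
/- Let D ⊆ ℂ be a domain, E ⊆ D, α an ordinal number, and z₀ ∈ E_D^(α). Then z₀ ∈ E_A^(α) for every open set A ⊆ D with z₀ ∈ A. -/
open Filter Set

/-- Iterated (transfinite) derived set of `E` with respect to `A`:
`E_A^(0) = E`, `E_A^(α+1) = (E_A^(α))' ∩ A`, and at limit stages the
intersection over `1 ≤ β < α`. -/
noncomputable def derivIter (A : Set ℂ) (E : Set ℂ) (o : Ordinal) : Set ℂ :=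
  Ordinal.limitRecOn o E
    (fun _ ih => {z | z ∈ A ∧ AccPt z (Filter.principal ih)})
    (fun o _ ih => ⋂ (β : Ordinal) (h : β < o) (_ : 1 ≤ β), ih β h)

lemma derivIter_zero (A E : Set ℂ) : derivIter A E 0 = E :=
  Ordinal.limitRecOn_zero ..

lemma derivIter_add_one (A E : Set ℂ) (o : Ordinal) :
    derivIter A E (o + 1) = {z | z ∈ A ∧ AccPt z (𝓟 (derivIter A E o))} :=
  Ordinal.limitRecOn_add_one ..

lemma derivIter_limit (A E : Set ℂ) {o : Ordinal} (ho : Order.IsSuccLimit o) :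
    derivIter A E o = ⋂ (β : Ordinal) (_ : β < o) (_ : 1 ≤ β), derivIter A E β :=
  Ordinal.limitRecOn_limit _ _ _ _ ho

lemma inter_derivIter_subset {A : Set ℂ} (hA : IsOpen A) (D E : Set ℂ) (o : Ordinal) :
    A ∩ derivIter D E o ⊆ derivIter A E o := by
  induction o using Ordinal.limitRecOn with
  | zero =>
    rw [derivIter_zero, derivIter_zero]
    exact inter_subset_right
  | add_one o ih =>
    rintro z ⟨hzA, hz⟩
    rw [derivIter_add_one] at hz ⊢
    -- accumulation at `z` only sees a neighbourhood of `z`, and `A` is one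
    have hacc : AccPt z (𝓟 (A ∩ derivIter D E o)) := hz.2.nhds_inter (hA.mem_nhds hzA)
    exact ⟨hzA, hacc.mono (principal_mono.mpr ih)⟩
  | limit o ho ih =>
    rintro z ⟨hzA, hz⟩
    rw [derivIter_limit _ _ ho] at hz ⊢
    simp only [mem_iInter] at hz ⊢
    exact fun β hβ h1β => ih β hβ ⟨hzA, hz β hβ h1β⟩

theorem stmt_7_general (D : Set ℂ) (E : Set ℂ)
    (α : Ordinal) (z₀ : ℂ) (hz₀ : z₀ ∈ derivIter D E α)
    (A : Set ℂ) (hA : IsOpen A) (hzA : z₀ ∈ A) :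
    z₀ ∈ derivIter A E α :=
  inter_derivIter_subset hA D E α ⟨hzA, hz₀⟩

theorem stmt_7 (D : Set ℂ) (hD : IsOpen D) (hDc : IsConnected D) (E : Set ℂ) (hE : E ⊆ D)
    (α : Ordinal) (z₀ : ℂ) (hz₀ : z₀ ∈ derivIter D E α)
    (A : Set ℂ) (hA : IsOpen A) (hAD : A ⊆ D) (hzA : z₀ ∈ A) :
    z₀ ∈ derivIter A E α :=
  stmt_7_general D E α z₀ hz₀ A hA hzA
end

section
/- Let (aₙ) be an increasing sequence of positive reals satisfying a_{n+2} ≥ a_{n+1}·aₙ for all n ≥ 1, with a₁ > 1 and a₂ > 1. Then (aₙ/a_{n−1})^{1/n} → ∞ as n → ∞, and for all sufficiently large n, aₙ ≥ 1/(1 − (1 − 2^{−(n+1)})^{1/(n+1)}). -/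
/-!
Taking logarithms turns `a (n + 2) ≥ a (n + 1) * a n` into the Fibonacci inequality
`u (n + 2) ≥ u (n + 1) + u n` for `u = log ∘ a`, so `u n ≥ c * fib n ≥ c * φ ^ (n - 2)` with
`c = min (u 1) (u 2) > 0`. Hence `u` is superlinear, i.e. `a` outgrows every geometric sequence.
The first claim follows because `a n / a (n - 1) ≥ a (n - 2)`; for the second, Bernoulli's
inequality bounds the left-hand side by `(n + 1) * 2 ^ (n + 1) ≤ 4 ^ (n + 1)`.
-/

open Filter Real Asymptotics
open scoped goldenRatio

theorem goldenRatio_pow_le_fib_add_two : ∀ n : ℕ, φ ^ n ≤ Nat.fib (n + 2)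
  | 0 => by simp
  | 1 => by norm_num [Nat.fib_add_two]; exact goldenRatio_lt_two.le
  | n + 2 => by
    have hφ := goldenRatio_pow_sub_goldenRatio_pow n
    have h₀ := goldenRatio_pow_le_fib_add_two n
    have h₁ := goldenRatio_pow_le_fib_add_two (n + 1)
    rw [Nat.fib_add_two, Nat.cast_add]
    linarith

theorem isLittleO_natCast_add_const_fib (k : ℕ) :
    (fun n : ℕ => (n : ℝ) + k) =o[atTop] (fun n => (Nat.fib n : ℝ)) := by
  have hφ : (fun n : ℕ => φ ^ n) =O[atTop] (fun n => (Nat.fib n : ℝ)) := by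
    refine IsBigO.of_bound (φ ^ 2) ?_
    filter_upwards [eventually_ge_atTop 2] with n hn
    obtain ⟨m, rfl⟩ := Nat.exists_eq_add_of_le' hn
    rw [norm_of_nonneg (by positivity), norm_of_nonneg (by positivity), pow_add, mul_comm]
    exact mul_le_mul_of_nonneg_left (goldenRatio_pow_le_fib_add_two m) (by positivity)
  have hk : (fun _ : ℕ => (k : ℝ)) =o[atTop] (fun n => φ ^ n) :=
    isLittleO_const_left.2 <| .inr <|
      tendsto_norm_atTop_atTop.comp (tendsto_pow_atTop_atTop_of_one_lt one_lt_goldenRatio)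
  exact ((isLittleO_coe_const_pow_of_one_lt one_lt_goldenRatio).add hk).trans_isBigO hφ

theorem mul_fib_le_of_add_le {u : ℕ → ℝ} {c : ℝ}
    (hu : ∀ n, 1 ≤ n → u (n + 1) + u n ≤ u (n + 2)) (h₁ : c ≤ u 1) (h₂ : c ≤ u 2) :
    ∀ n, 1 ≤ n → c * Nat.fib n ≤ u n := by
  have key : ∀ n, c * Nat.fib (n + 1) ≤ u (n + 1) ∧ c * Nat.fib (n + 2) ≤ u (n + 2) := by
    intro n
    induction n with
    | zero => simpa using ⟨h₁, h₂⟩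
    | succ n ih =>
      refine ⟨ih.2, ?_⟩
      have hstep := hu (n + 1) (by omega)
      rw [Nat.fib_add_two, Nat.cast_add]
      linarith [ih.1, ih.2]
  intro n hn
  obtain ⟨m, rfl⟩ := Nat.exists_eq_add_of_le' hn
  exact (key m).1

theorem eventually_mul_add_le_of_add_le {u : ℕ → ℝ}
    (hu : ∀ n, 1 ≤ n → u (n + 1) + u n ≤ u (n + 2)) (h₁ : 0 < u 1) (h₂ : 0 < u 2)
    (C : ℝ) (k : ℕ) : ∀ᶠ n in atTop, C * (n + k) ≤ u n := by
  set c := min (u 1) (u 2)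
  have hc : 0 < c := lt_min h₁ h₂
  have hfib := mul_fib_le_of_add_le hu (min_le_left _ _) (min_le_right _ _)
  filter_upwards [(isLittleO_natCast_add_const_fib k).def (c := c / (|C| + 1)) (by positivity),
    eventually_ge_atTop 1] with n hn hn₁
  rw [norm_of_nonneg (by positivity), norm_of_nonneg (by positivity)] at hn
  calc C * (n + k) ≤ (|C| + 1) * (n + k) := by
        gcongr
        linarith [le_abs_self C]
    _ ≤ (|C| + 1) * (c / (|C| + 1) * Nat.fib n) := by gcongr
    _ = c * Nat.fib n := by field_simp
    _ ≤ u n := hfib n hn₁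

theorem eventually_pow_le_of_mul_le {a : ℕ → ℝ} (hpos : ∀ n, 1 ≤ n → 0 < a n)
    (h₁ : 1 < a 1) (h₂ : 1 < a 2) (hrec : ∀ n, 1 ≤ n → a (n + 1) * a n ≤ a (n + 2))
    (B : ℝ) (hB : 0 < B) (k : ℕ) : ∀ᶠ n in atTop, B ^ (n + k) ≤ a n := by
  have hlog : ∀ n, 1 ≤ n → log (a (n + 1)) + log (a n) ≤ log (a (n + 2)) := by
    intro n hn
    have ha₀ := hpos n hn
    have ha₁ := hpos (n + 1) (by omega)
    rw [← log_mul ha₁.ne' ha₀.ne']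
    exact log_le_log (by positivity) (hrec n hn)
  filter_upwards [eventually_mul_add_le_of_add_le (u := fun n => log (a n)) hlog (log_pos h₁)
    (log_pos h₂) (log B) k, eventually_ge_atTop 1] with n hn hn₁
  rw [← log_le_log_iff (by positivity) (hpos n hn₁), log_pow]
  push_cast
  linarith

theorem one_div_one_sub_rpow_le {ε p : ℝ} (hε₀ : 0 < ε) (hε₁ : ε ≤ 1) (hp₀ : 0 < p)
    (hp₁ : p ≤ 1) : 1 / (1 - (1 - ε) ^ p) ≤ 1 / (p * ε) := by
  have hbern : (1 - ε) ^ p ≤ 1 - p * ε := by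
    simpa [sub_eq_add_neg] using
      rpow_one_add_le_one_add_mul_self (s := -ε) (by linarith) hp₀.le hp₁
  exact one_div_le_one_div_of_le (by positivity) (by linarith)

theorem stmt_17_general (a : ℕ → ℝ) (hpos : ∀ n, 1 ≤ n → 0 < a n)
    (h1 : 1 < a 1) (h2 : 1 < a 2)
    (hrec : ∀ n, 1 ≤ n → a (n + 1) * a n ≤ a (n + 2)) :
    Filter.Tendsto (fun n : ℕ => (a n / a (n - 1)) ^ ((1 : ℝ) / n)) Filter.atTop Filter.atTop ∧
    ∃ N : ℕ, ∀ n ≥ N,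
      1 / (1 - (1 - (2 : ℝ) ^ (-(n + 1 : ℤ))) ^ ((1 : ℝ) / (n + 1))) ≤ a n := by
  have hgrowth := eventually_pow_le_of_mul_le hpos h1 h2 hrec
  constructor
  · rw [← tendsto_add_atTop_iff_nat 2]
    refine tendsto_atTop.2 fun b => ?_
    filter_upwards [hgrowth (max b 1) (by positivity) 2, eventually_ge_atTop 1] with n hn hn₁
    have hratio : a n ≤ a (n + 2) / a (n + 1) :=
      (le_div_iff₀ (hpos _ (by omega))).2 (by linarith [hrec n hn₁])
    have hroot : max b 1 ≤ (a (n + 2) / a (n + 1)) ^ ((n + 2 : ℝ))⁻¹ := by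
      have hquot : 0 < a (n + 2) / a (n + 1) := div_pos (hpos _ (by omega)) (hpos _ (by omega))
      rw [le_rpow_inv_iff_of_pos (by positivity) hquot.le (by positivity)]
      exact_mod_cast hn.trans hratio
    simpa using (le_max_left b 1).trans hroot
  · refine eventually_atTop.1 ?_
    filter_upwards [hgrowth 4 (by norm_num) 1] with n hn
    have hε : (2 : ℝ) ^ (-(n + 1 : ℤ)) = ((2 : ℝ) ^ (n + 1))⁻¹ := by
      rw [zpow_neg]; norm_cast
    calc _ ≤ 1 / (1 / (n + 1) * (2 : ℝ) ^ (-(n + 1 : ℤ))) :=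
          one_div_one_sub_rpow_le (by positivity) (zpow_le_one_of_nonpos₀ one_le_two (by omega))
            (by positivity)
            (div_le_one_of_le₀ (by linarith [n.cast_nonneg (α := ℝ)]) (by positivity))
      _ = (n + 1) * 2 ^ (n + 1) := by rw [hε]; field_simp
      _ ≤ 2 ^ (n + 1) * 2 ^ (n + 1) := by gcongr; exact_mod_cast (Nat.lt_two_pow_self).le
      _ = 4 ^ (n + 1) := by rw [← mul_pow]; norm_num
      _ ≤ a n := hn

theorem stmt_17 (a : ℕ → ℝ) (hpos : ∀ n, 1 ≤ n → 0 < a n)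
    (hmono : ∀ n, 1 ≤ n → a n < a (n + 1))
    (h1 : 1 < a 1) (h2 : 1 < a 2)
    (hrec : ∀ n, 1 ≤ n → a (n + 1) * a n ≤ a (n + 2)) :
    Filter.Tendsto (fun n : ℕ => (a n / a (n - 1)) ^ ((1 : ℝ) / n)) Filter.atTop Filter.atTop ∧
    ∃ N : ℕ, ∀ n ≥ N,
      1 / (1 - (1 - (2 : ℝ) ^ (-(n + 1 : ℤ))) ^ ((1 : ℝ) / (n + 1))) ≤ a n :=
  stmt_17_general a hpos h1 h2 hrec
end
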